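/- Let ψ be defined on the domain {z ∈ ℂⁿ : Re z_j < 0 for all j} by ψ(z) = c₀ + c₁·z + ∫_{ℝ₊ⁿ∖{0}} (e^{z·u} − 1) dμ(u), where c₀ ≤ 0, c₁ ∈ ℝ₊ⁿ, and μ is a positive measure on ℝ₊ⁿ∖{0} such that for sufficiently small δ > 0 the functions u ↦ u_j are μ-integrable on [0,δ)ⁿ∖{0} and μ(ℝ₊ⁿ∖[0,δ)ⁿ) < ∞. If ψ is not identically zero, then Re ψ(z) < 0 for every z with Re z_j < 0 for all j. -/

import Mathlib

open MeasureTheory Filter Set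

noncomputable section

/-- The open negative orthant `(-∞,0)^n`. -/
def negOrthant (n : ℕ) : Set (Fin n → ℝ) := {s | ∀ i, s i < 0}

/-- `f` is absolutely monotone on `(-∞,0)^n`: it is `C^∞` there and all its
iterated partial derivatives (of all orders, including order `0`) are nonnegative. -/
def AbsMono (n : ℕ) (f : (Fin n → ℝ) → ℝ) : Prop :=
  ContDiffOn ℝ ⊤ f (negOrthant n) ∧
  ∀ (k : ℕ) (m : Fin k → Fin n), ∀ x ∈ negOrthant n,
    0 ≤ iteratedFDerivWithin ℝ k f (negOrthant n) x (fun i => Pi.single (m i) 1)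

/-- `ψ` belongs to the class `T_n`: it is a nonpositive `C^∞` function on `(-∞,0)^n`
all of whose partial derivatives of every order `≥ 1` are nonnegative. -/
def MemT (n : ℕ) (ψ : (Fin n → ℝ) → ℝ) : Prop :=
  ContDiffOn ℝ ⊤ ψ (negOrthant n) ∧
  (∀ x ∈ negOrthant n, ψ x ≤ 0) ∧
  ∀ (k : ℕ) (m : Fin (k + 1) → Fin n), ∀ x ∈ negOrthant n,
    0 ≤ iteratedFDerivWithin ℝ (k + 1) ψ (negOrthant n) x (fun i => Pi.single (m i) 1)

/-- `ℝ₊ⁿ ∖ {0}`. -/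
def posPart (n : ℕ) : Set (Fin n → ℝ) := {u | (∀ i, 0 ≤ u i) ∧ u ≠ 0}

/-- `[0,δ)ⁿ ∖ {0}`. -/
def smallBox (n : ℕ) (δ : ℝ) : Set (Fin n → ℝ) := {u | (∀ i, 0 ≤ u i ∧ u i < δ) ∧ u ≠ 0}

/-- `ℝ₊ⁿ ∖ [0,δ)ⁿ`. -/
def farPart (n : ℕ) (δ : ℝ) : Set (Fin n → ℝ) := {u | (∀ i, 0 ≤ u i) ∧ ¬ ∀ i, u i < δ}

/-- The conditions on the representing measure: for sufficiently small `δ > 0`,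
the coordinate functions are integrable on `[0,δ)ⁿ ∖ {0}` and
`μ(ℝ₊ⁿ ∖ [0,δ)ⁿ) < ∞`. -/
def GoodMeasure (n : ℕ) (μ : Measure (Fin n → ℝ)) : Prop :=
  ∃ δ > (0:ℝ), (∀ j, IntegrableOn (fun u => u j) (smallBox n δ) μ) ∧ μ (farPart n δ) < ⊤

lemma norm_exp_sub_one_le {w : ℂ} (hw : w.re ≤ 0) :
    ‖Complex.exp w - 1‖ ≤ 2 * ‖w‖ := by
  rcases le_or_gt ‖w‖ 1 with h | h
  · exact Complex.norm_exp_sub_one_le h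
  · calc ‖Complex.exp w - 1‖ ≤ ‖Complex.exp w‖ + ‖(1:ℂ)‖ := norm_sub_le _ _
      _ ≤ 1 + 1 := by
          rw [norm_one]
          gcongr
          rw [Complex.norm_exp]
          exact Real.exp_le_one_iff.2 hw
      _ ≤ 2 * ‖w‖ := by nlinarith

lemma meas_posPart (n : ℕ) : MeasurableSet (posPart n) := by
  have : posPart n = (⋂ i, {u : Fin n → ℝ | 0 ≤ u i}) ∩ {(0 : Fin n → ℝ)}ᶜ := by
    ext u
    simp only [Set.mem_inter_iff, Set.mem_iInter, Set.mem_compl_iff, Set.mem_singleton_iff]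
    exact Iff.rfl
  rw [this]
  exact (MeasurableSet.iInter fun i =>
      measurableSet_le measurable_const (measurable_pi_apply i)).inter
    (measurableSet_singleton 0).compl

lemma meas_smallBox (n : ℕ) (δ : ℝ) : MeasurableSet (smallBox n δ) := by
  have : smallBox n δ = (⋂ i, {u : Fin n → ℝ | 0 ≤ u i} ∩ {u | u i < δ}) ∩
      {(0 : Fin n → ℝ)}ᶜ := by
    ext u
    simp only [Set.mem_inter_iff, Set.mem_iInter, Set.mem_compl_iff, Set.mem_singleton_iff,
      Set.mem_setOf_eq]
    exact Iff.rfl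
  rw [this]
  exact (MeasurableSet.iInter fun i =>
      (measurableSet_le measurable_const (measurable_pi_apply i)).inter
      (measurableSet_lt (measurable_pi_apply i) measurable_const)).inter
    (measurableSet_singleton 0).compl

lemma meas_farPart (n : ℕ) (δ : ℝ) : MeasurableSet (farPart n δ) := by
  have : farPart n δ = (⋂ i, {u : Fin n → ℝ | 0 ≤ u i}) ∩ (⋂ i, {u | u i < δ})ᶜ := by
    ext u
    simp only [Set.mem_inter_iff, Set.mem_iInter, Set.mem_compl_iff, Set.mem_setOf_eq]
    exact Iff.rfl
  rw [this]
  exact (MeasurableSet.iInter fun i =>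
      measurableSet_le measurable_const (measurable_pi_apply i)).inter
    (MeasurableSet.iInter fun i =>
      measurableSet_lt (measurable_pi_apply i) measurable_const).compl

lemma cont_integrand (n : ℕ) (z : Fin n → ℂ) :
    Continuous (fun u : Fin n → ℝ => Complex.exp (∑ i, z i * (u i : ℂ)) - 1) := by
  apply Continuous.sub _ continuous_const
  exact Complex.continuous_exp.comp (continuous_finset_sum _ fun i _ =>
    continuous_const.mul (Complex.continuous_ofReal.comp (continuous_apply i)))

lemma re_sum_nonpos {n : ℕ} {z : Fin n → ℂ} (hz : ∀ j, (z j).re ≤ 0)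
    {u : Fin n → ℝ} (hu : ∀ i, 0 ≤ u i) :
    (∑ i, z i * (u i : ℂ)).re ≤ 0 := by
  rw [Complex.re_sum]
  apply Finset.sum_nonpos
  intro i _
  simp only [Complex.mul_re, Complex.ofReal_re, Complex.ofReal_im, mul_zero, sub_zero]
  exact mul_nonpos_of_nonpos_of_nonneg (hz i) (hu i)

lemma integrable_main {n : ℕ} {μ : Measure (Fin n → ℝ)} (hμ : GoodMeasure n μ)
    {z : Fin n → ℂ} (hz : ∀ j, (z j).re < 0) :
    IntegrableOn (fun u => Complex.exp (∑ i, z i * (u i : ℂ)) - 1) (posPart n) μ := by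
  obtain ⟨δ, hδ, hint, hfar⟩ := hμ
  have hsub : posPart n ⊆ smallBox n δ ∪ farPart n δ := by
    intro u hu
    by_cases h : ∀ i, u i < δ
    · exact Or.inl ⟨fun i => ⟨hu.1 i, h i⟩, hu.2⟩
    · exact Or.inr ⟨hu.1, h⟩
  have hcont := cont_integrand n z
  have hmeas : ∀ s : Set (Fin n → ℝ),
      AEStronglyMeasurable (fun u => Complex.exp (∑ i, z i * (u i : ℂ)) - 1) (μ.restrict s) :=
    fun s => hcont.aestronglyMeasurable
  have h1 : IntegrableOn (fun u => Complex.exp (∑ i, z i * (u i : ℂ)) - 1) (smallBox n δ) μ := by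
    apply Integrable.mono' (g := fun u => ∑ i, 2 * ‖z i‖ * |u i|)
    · exact integrable_finset_sum _ fun i _ => ((hint i).abs.const_mul _)
    · exact hmeas _
    · rw [ae_restrict_iff' (meas_smallBox n δ)]
      filter_upwards with u hu
      calc ‖Complex.exp (∑ i, z i * (u i : ℂ)) - 1‖
          ≤ 2 * ‖∑ i, z i * (u i : ℂ)‖ :=
            norm_exp_sub_one_le (re_sum_nonpos (fun j => (hz j).le) (fun i => (hu.1 i).1))
        _ ≤ 2 * ∑ i, ‖z i * (u i : ℂ)‖ := by
            gcongr; exact norm_sum_le _ _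
        _ = ∑ i, 2 * ‖z i‖ * |u i| := by
            rw [Finset.mul_sum]
            congr 1; ext i
            rw [norm_mul, Complex.norm_real, Real.norm_eq_abs]; ring
  have h2 : IntegrableOn (fun u => Complex.exp (∑ i, z i * (u i : ℂ)) - 1) (farPart n δ) μ := by
    apply Integrable.mono' (g := fun _ => (2:ℝ))
    · exact integrableOn_const (C := (2:ℝ)) hfar.ne
    · exact hmeas _
    · rw [ae_restrict_iff' (meas_farPart n δ)]
      filter_upwards with u hu
      calc ‖Complex.exp (∑ i, z i * (u i : ℂ)) - 1‖
          ≤ ‖Complex.exp (∑ i, z i * (u i : ℂ))‖ + ‖(1:ℂ)‖ := norm_sub_le _ _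
        _ ≤ 1 + 1 := by
            rw [norm_one]
            gcongr
            rw [Complex.norm_exp]
            exact Real.exp_le_one_iff.2 (re_sum_nonpos (fun j => (hz j).le) hu.1)
        _ = 2 := by norm_num
  exact (h1.union h2).mono_set hsub


/-- a function given on `{Re z < 0} ⊆ ℂⁿ` by the integral
representation and not identically zero maps `{Re z < 0}` into the open
half-plane `{Re ζ < 0}`. -/
theorem re_neg_of_not_zero (n : ℕ) (c₀ : ℝ) (hc₀ : c₀ ≤ 0)
    (c₁ : Fin n → ℝ) (hc₁ : ∀ j, 0 ≤ c₁ j)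
    (μ : Measure (Fin n → ℝ)) (hμ : GoodMeasure n μ) (hsupp : μ (posPart n)ᶜ = 0)
    (ψ : (Fin n → ℂ) → ℂ)
    (hrep : ∀ z : Fin n → ℂ, (∀ j, (z j).re < 0) →
      ψ z = (c₀ : ℂ) + ∑ j, (c₁ j : ℂ) * z j +
        ∫ u in posPart n, (Complex.exp (∑ i, z i * (u i : ℂ)) - 1) ∂μ)
    (hne : ∃ z : Fin n → ℂ, (∀ j, (z j).re < 0) ∧ ψ z ≠ 0) :
    ∀ z : Fin n → ℂ, (∀ j, (z j).re < 0) → (ψ z).re < 0 := by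
  intro z hz
  have hint := integrable_main hμ hz
  have hre : (ψ z).re = c₀ + (∑ j, c₁ j * (z j).re) +
      ∫ u in posPart n, (Complex.exp (∑ i, z i * (u i : ℂ)) - 1).re ∂μ := by
    have hri : (∫ u in posPart n, (Complex.exp (∑ i, z i * (u i : ℂ)) - 1) ∂μ).re =
        ∫ u in posPart n, (Complex.exp (∑ i, z i * (u i : ℂ)) - 1).re ∂μ := by
      simpa using (integral_re hint).symm
    rw [hrep z hz]
    simp only [Complex.add_re, Complex.ofReal_re, Complex.re_sum, Complex.mul_re,
      Complex.ofReal_im, zero_mul, sub_zero, hri]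
  have hterm2 : ∀ j, c₁ j * (z j).re ≤ 0 :=
    fun j => mul_nonpos_of_nonneg_of_nonpos (hc₁ j) (hz j).le
  have hsum2 : ∑ j, c₁ j * (z j).re ≤ 0 := Finset.sum_nonpos fun j _ => hterm2 j
  have hptneg : ∀ u ∈ posPart n, (Complex.exp (∑ i, z i * (u i : ℂ)) - 1).re < 0 := by
    intro u hu
    have hsum : (∑ i, z i * (u i : ℂ)).re < 0 := by
      obtain ⟨i0, hi0⟩ : ∃ i, u i ≠ 0 := Function.ne_iff.1 hu.2
      have hle : ∀ i ∈ Finset.univ, (z i * (u i : ℂ)).re ≤ 0 := by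
        intro i _
        simp only [Complex.mul_re, Complex.ofReal_re, Complex.ofReal_im, mul_zero, sub_zero]
        exact mul_nonpos_of_nonpos_of_nonneg (hz i).le (hu.1 i)
      have hlt : (z i0 * (u i0 : ℂ)).re < 0 := by
        simp only [Complex.mul_re, Complex.ofReal_re, Complex.ofReal_im, mul_zero, sub_zero]
        exact mul_neg_of_neg_of_pos (hz i0) ((hu.1 i0).lt_of_ne' hi0)
      rw [Complex.re_sum]
      calc ∑ i, (z i * (u i : ℂ)).re < ∑ _i : Fin n, (0:ℝ) :=
            Finset.sum_lt_sum hle ⟨i0, Finset.mem_univ _, hlt⟩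
        _ = 0 := Finset.sum_const_zero
    have hlt1 : (Complex.exp (∑ i, z i * (u i : ℂ))).re < 1 :=
      lt_of_le_of_lt (Complex.re_le_norm _)
        (by rw [Complex.norm_exp]; exact Real.exp_lt_one_iff.2 hsum)
    simp only [Complex.sub_re, Complex.one_re]
    linarith
  have hintle : ∫ u in posPart n, (Complex.exp (∑ i, z i * (u i : ℂ)) - 1).re ∂μ ≤ 0 :=
    setIntegral_nonpos (meas_posPart n) fun u hu => (hptneg u hu).le
  by_cases hμ0 : μ (posPart n) = 0
  · by_cases hc0 : c₀ = 0
    · by_cases hc1 : ∃ j, 0 < c₁ j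
      · obtain ⟨j0, hj0⟩ := hc1
        have : ∑ j, c₁ j * (z j).re < 0 := by
          calc ∑ j, c₁ j * (z j).re < ∑ _j : Fin n, (0:ℝ) :=
              Finset.sum_lt_sum (fun j _ => hterm2 j)
                ⟨j0, Finset.mem_univ _, mul_neg_of_pos_of_neg hj0 (hz j0)⟩
            _ = 0 := Finset.sum_const_zero
        linarith [hre, hintle]
      · exfalso
        push_neg at hc1
        have hc1' : ∀ j, c₁ j = 0 := fun j => le_antisymm (hc1 j) (hc₁ j)
        obtain ⟨w, hw, hwne⟩ := hne
        apply hwne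
        rw [hrep w hw, Measure.restrict_eq_zero.2 hμ0]
        simp [hc0, hc1']
    · have : c₀ < 0 := lt_of_le_of_ne hc₀ hc0
      linarith [hre, hintle, hsum2]
  · have hμpos : 0 < μ (posPart n) := pos_iff_ne_zero.2 hμ0
    have hintlt : ∫ u in posPart n, (Complex.exp (∑ i, z i * (u i : ℂ)) - 1).re ∂μ < 0 := by
      have hgpos : 0 < ∫ u in posPart n,
          (-(Complex.exp (∑ i, z i * (u i : ℂ)) - 1).re) ∂μ := by
        rw [setIntegral_pos_iff_support_of_nonneg_ae]
        · refine lt_of_lt_of_le hμpos (measure_mono ?_)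
          intro u hu
          refine ⟨?_, hu⟩
          simp only [Function.mem_support, neg_ne_zero]
          exact (hptneg u hu).ne
        · rw [Filter.EventuallyLE, ae_restrict_iff' (meas_posPart n)]
          filter_upwards with u hu
          simpa using (hptneg u hu).le
        · exact hint.re.neg
      rw [integral_neg] at hgpos
      linarith
    linarith [hre, hintlt, hsum2]
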